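/- arXiv:2310.06166 — 3 statements merged into one kernel-verified Lean document; each statement's English description precedes it below -/
import Mathlib

section
/- Let α ≥ 1 and k ≥ 1 an integer. If α satisfies the equation (1 + α/k)^{k − ⌈k/α⌉} · (α/k) · ⌈k/α⌉ = ρ for some ρ ≥ 1, then 1 + ln ρ ≤ α ≤ 1 + ln ρ − ln(1 − α²/k), provided α² < k. In particular, as k → ∞ with ρ fixed, any such α converges to 1 + ln ρ. -/
/-!
Write `c = ⌈k/α⌉` and take logarithms: `log ρ = (k - c) log(1 + α/k) + log(α c / k)`.
Since `log y ≤ y - 1`, this is at most `(k - c) α/k + α c/k - 1 = α - 1`. Conversely, Bernoulli's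
inequality shows that replacing `c` by `k/α` only decreases the right-hand side, leaving
`(k - k/α) log(1 + α/k) ≥ (k - k/α) α/(k + α) ≥ α - 1 - α²/k ≥ α - 1 + log(1 - α²/k)`.
-/

open Real

section

variable {x α c : ℝ}

lemma log_one_add_div_rpow_mul (hx : 0 < x) (hα : 0 < α) (hc : 0 < c) :
    log ((1 + α / x) ^ (x - c) * (α / x) * c) = (x - c) * log (1 + α / x) + log (α * c / x) := by
  have hb : 0 < 1 + α / x := by positivity
  rw [log_mul (by positivity) hc.ne', log_mul (by positivity) (by positivity), log_rpow hb,
    add_assoc, ← log_mul (by positivity) hc.ne', div_mul_eq_mul_div]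

lemma log_one_add_div_rpow_mul_le (hx : 0 < x) (hα : 0 < α) (hc : 0 < c) (hcx : c ≤ x) :
    log ((1 + α / x) ^ (x - c) * (α / x) * c) ≤ α - 1 := by
  rw [log_one_add_div_rpow_mul hx hα hc]
  have hL : log (1 + α / x) ≤ α / x := by
    linarith [log_le_sub_one_of_pos (by positivity : 0 < 1 + α / x)]
  have hR : log (α * c / x) ≤ α * c / x - 1 := log_le_sub_one_of_pos (by positivity)
  calc (x - c) * log (1 + α / x) + log (α * c / x)
      ≤ (x - c) * (α / x) + (α * c / x - 1) := by gcongr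
    _ = α - 1 := by field_simp; ring

lemma sub_div_mul_log_le_log_one_add_div_rpow_mul (hx : 0 < x) (hα : 0 < α)
    (hc : x / α ≤ c) (hc' : c ≤ x / α + 1) :
    (x - x / α) * log (1 + α / x) ≤ log ((1 + α / x) ^ (x - c) * (α / x) * c) := by
  have hc0 : 0 < c := (div_pos hx hα).trans_le hc
  rw [log_one_add_div_rpow_mul hx hα hc0]
  have hbern : (1 + α / x) ^ (c - x / α) ≤ 1 + (c - x / α) * (α / x) :=
    rpow_one_add_le_one_add_mul_self (by linarith [div_pos hα hx]) (by linarith) (by linarith)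
  have hαc : 1 + (c - x / α) * (α / x) = α * c / x := by field_simp; ring
  have : (c - x / α) * log (1 + α / x) ≤ log (α * c / x) := by
    rw [← hαc, ← log_rpow (by positivity)]
    exact log_le_log (by positivity) hbern
  linarith

lemma sub_sub_sq_div_le_sub_div_mul_log (hx : 0 < x) (hα : 1 ≤ α) :
    α - 1 - α ^ 2 / x ≤ (x - x / α) * log (1 + α / x) := by
  have hα0 : 0 < α := by linarith
  have hL : α / (x + α) ≤ log (1 + α / x) := by
    have h := one_sub_inv_le_log_of_pos (by positivity : 0 < 1 + α / x)
    have : 1 - (1 + α / x)⁻¹ = α / (x + α) := by field_simp; ring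
    linarith
  have hxα : 0 ≤ x - x / α := by
    rw [sub_nonneg]; exact div_le_self hx.le hα
  calc α - 1 - α ^ 2 / x ≤ (x - x / α) * (α / (x + α)) := by
        rw [show (x - x / α) * (α / (x + α)) = (α - 1) * x / (x + α) by field_simp]
        rw [le_div_iff₀ (by positivity)]
        have : α ^ 2 / x * x = α ^ 2 := by field_simp
        nlinarith [div_nonneg (sq_nonneg α) hx.le]
    _ ≤ (x - x / α) * log (1 + α / x) := by gcongr

end

theorem stmt_6_general (k : ℕ) (α ρ : ℝ) (hα : 1 ≤ α)
    (hαk : α ^ 2 < k)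
    (heq : (1 + α / k) ^ ((k : ℝ) - (⌈(k : ℝ) / α⌉ : ℝ)) * (α / k) * (⌈(k : ℝ) / α⌉ : ℝ)
      = ρ) :
    1 + Real.log ρ ≤ α ∧ α ≤ 1 + Real.log ρ - Real.log (1 - α ^ 2 / k) := by
  have hα0 : 0 < α := by linarith
  have hk : (0 : ℝ) < k := by nlinarith
  have hceil : (⌈(k : ℝ) / α⌉ : ℝ) ≤ k := by
    exact_mod_cast Int.ceil_le.2 (by exact_mod_cast div_le_self hk.le hα)
  have hceil₀ : (0 : ℝ) < ⌈(k : ℝ) / α⌉ := (div_pos hk hα0).trans_le (Int.le_ceil _)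
  have hsq : log (1 - α ^ 2 / k) ≤ -(α ^ 2 / k) := by
    have : 0 < 1 - α ^ 2 / k := by rw [sub_pos, div_lt_one hk]; exact hαk
    linarith [log_le_sub_one_of_pos this]
  rw [← heq]
  constructor
  · linarith [log_one_add_div_rpow_mul_le hk hα0 hceil₀ hceil]
  · linarith [sub_div_mul_log_le_log_one_add_div_rpow_mul hk hα0 (Int.le_ceil _)
      (Int.ceil_lt_add_one _).le, sub_sub_sq_div_le_sub_div_mul_log hk hα]

/-- if `α ≥ 1` satisfies `(1+α/k)^{k−⌈k/α⌉}·(α/k)·⌈k/α⌉ = ρ` with `ρ ≥ 1`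
and `α² < k`, then `1 + ln ρ ≤ α ≤ 1 + ln ρ − ln(1 − α²/k)`. -/
theorem stmt_6 (k : ℕ) (hk : 1 ≤ k) (α ρ : ℝ) (hα : 1 ≤ α) (hρ : 1 ≤ ρ)
    (hαk : α ^ 2 < k)
    (heq : (1 + α / k) ^ ((k : ℝ) - (⌈(k : ℝ) / α⌉ : ℝ)) * (α / k) * (⌈(k : ℝ) / α⌉ : ℝ)
      = ρ) :
    1 + Real.log ρ ≤ α ∧ α ≤ 1 + Real.log ρ - Real.log (1 - α ^ 2 / k) :=
  stmt_6_general k α ρ hα hαk heq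
end

section
/- Suppose x ≥ 1 and ρ ≥ 1 satisfy x − (ζx − sqrt((ζx − 1)² + x − 1)) ≤ ln ρ, where ζ ≥ 1. Then x ≤ 1/2 + ((ζ−1)/(2ζ−1))·ln ρ + sqrt(1/4 + ((ζ−1)/(2ζ−1))·ln ρ + (ζ²/(2ζ−1)²)·ln² ρ). -/
/-! Isolating the square root and squaring turns the hypothesis into the quadratic inequality
`(2ζ - 1)(x² - x) ≤ 2(ζ - 1) L x + L²` in `x`, where `L = ln ρ`; the bound is its larger root,
reached by completing the square. -/

open Real

theorem le_half_add_sqrt_of_sq_sub_mul_le {x b c : ℝ} (h : x ^ 2 - b * x ≤ c) :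
    x ≤ b / 2 + √((b / 2) ^ 2 + c) := by
  have hsq : (x - b / 2) ^ 2 ≤ (b / 2) ^ 2 + c := by linarith [h]
  linarith [le_sqrt_of_sq_le hsq]

theorem quadratic_le_of_sub_sqrt_le {x ζ L : ℝ}
    (h : x - (ζ * x - √((ζ * x - 1) ^ 2 + x - 1)) ≤ L) :
    (2 * ζ - 1) * (x ^ 2 - x) ≤ 2 * (ζ - 1) * L * x + L ^ 2 := by
  have hsqrt : √((ζ * x - 1) ^ 2 + x - 1) ≤ L + (ζ - 1) * x := by linarith
  have hsq : (ζ * x - 1) ^ 2 + x - 1 ≤ (L + (ζ - 1) * x) ^ 2 := (sqrt_le_iff.mp hsqrt).2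
  linarith

theorem stmt_13_general (x ρ ζ : ℝ) (hζ : 1 ≤ ζ)
    (h : x - (ζ * x - Real.sqrt ((ζ * x - 1) ^ 2 + x - 1)) ≤ Real.log ρ) :
    x ≤ 1 / 2 + ((ζ - 1) / (2 * ζ - 1)) * Real.log ρ +
      Real.sqrt (1 / 4 + ((ζ - 1) / (2 * ζ - 1)) * Real.log ρ +
        (ζ ^ 2 / (2 * ζ - 1) ^ 2) * (Real.log ρ) ^ 2) := by
  set L := log ρ
  have hden : 0 < 2 * ζ - 1 := by linarith
  set b := 1 + 2 * ((ζ - 1) / (2 * ζ - 1)) * L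
  have hquad : x ^ 2 - b * x ≤ L ^ 2 / (2 * ζ - 1) := by
    rw [le_div_iff₀ hden]
    have hexpand : (x ^ 2 - b * x) * (2 * ζ - 1)
        = (2 * ζ - 1) * (x ^ 2 - x) - 2 * (ζ - 1) * L * x := by
      simp only [b]; field_simp; ring
    linarith [quadratic_le_of_sub_sqrt_le h]
  have hcompleted : (b / 2) ^ 2 + L ^ 2 / (2 * ζ - 1)
      = 1 / 4 + ((ζ - 1) / (2 * ζ - 1)) * L + (ζ ^ 2 / (2 * ζ - 1) ^ 2) * L ^ 2 := by
    simp only [b]; field_simp; ring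
  have hb : b / 2 = 1 / 2 + ((ζ - 1) / (2 * ζ - 1)) * L := by ring
  rw [← hcompleted, ← hb]
  exact le_half_add_sqrt_of_sq_sub_mul_le hquad

/-- if `x ≥ 1`, `ρ ≥ 1`, `ζ ≥ 1` satisfy
`x − (ζx − √((ζx−1)² + x−1)) ≤ ln ρ`, then
`x ≤ 1/2 + ((ζ−1)/(2ζ−1))·ln ρ + √(1/4 + ((ζ−1)/(2ζ−1))·ln ρ + (ζ²/(2ζ−1)²)·ln²ρ)`. -/
theorem stmt_13 (x ρ ζ : ℝ) (hx : 1 ≤ x) (hρ : 1 ≤ ρ) (hζ : 1 ≤ ζ)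
    (hdisc : 0 ≤ (ζ * x - 1) ^ 2 + x - 1)
    (h : x - (ζ * x - Real.sqrt ((ζ * x - 1) ^ 2 + x - 1)) ≤ Real.log ρ) :
    x ≤ 1 / 2 + ((ζ - 1) / (2 * ζ - 1)) * Real.log ρ +
      Real.sqrt (1 / 4 + ((ζ - 1) / (2 * ζ - 1)) * Real.log ρ +
        (ζ ^ 2 / (2 * ζ - 1) ^ 2) * (Real.log ρ) ^ 2) :=
  stmt_13_general x ρ ζ hζ h
end

section
/- Let f(i) = Σ_{j=1}^i c_j with 0 < c_1 ≤ c_2 ≤ ... ≤ c_k, suppose p_min > c_k (High-Value case), and let α ≥ 1. Then g(⌈k/α⌉) ≥ (1/α)·f*(p_min), where g(i) = p_min·i − f(i) and f*(p_min) = p_min·k − f(k). Consequently g^inv((1/α)·f*(p_min)) ≤ ⌈k/α⌉. -/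
/-- High-Value case, `p_min > c_k`: for `α ≥ 1`,
`g(⌈k/α⌉) ≥ (1/α)·f*(p_min)` where `f*(p_min) = p_min·k − f(k)`; consequently
`g^inv((1/α)·f*(p_min)) ≤ ⌈k/α⌉`, with `g^inv(ς) = min {i : g(i) ≥ ς}`. -/
theorem stmt_18 (k : ℕ) (hk : 1 ≤ k)
    (c : ℕ → ℝ)
    (hcpos : ∀ i, 1 ≤ i → i ≤ k → 0 < c i)
    (hcmono : ∀ i j, 1 ≤ i → i ≤ j → j ≤ k → c i ≤ c j)
    (f : ℕ → ℝ) (hf : ∀ i, f i = ∑ j ∈ Finset.Icc 1 i, c j)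
    (pmin : ℝ) (hpmin : c k < pmin)
    (g : ℕ → ℝ) (hg : ∀ i, g i = pmin * i - f i)
    (α : ℝ) (hα : 1 ≤ α) :
    (1 / α) * (pmin * k - f k) ≤ g ⌈(k : ℝ) / α⌉₊ ∧
    sInf {i : ℕ | (1 / α) * (pmin * k - f k) ≤ g i} ≤ ⌈(k : ℝ) / α⌉₊ := by
  have hα0 : (0:ℝ) < α := lt_of_lt_of_le one_pos hα
  have hk0 : (0:ℝ) < (k:ℝ) := by exact_mod_cast hk
  set m := ⌈(k : ℝ) / α⌉₊ with hm
  have hm1 : 1 ≤ m := by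
    rw [hm, Nat.one_le_ceil_iff]
    positivity
  have hmk : m ≤ k := by
    rw [hm]
    apply Nat.ceil_le.mpr
    rw [div_le_iff₀ hα0]
    nlinarith
  have hmk' : (m:ℝ) ≤ (k:ℝ) := by exact_mod_cast hmk
  have hm1' : (1:ℝ) ≤ (m:ℝ) := by exact_mod_cast hm1
  have hkam : (k:ℝ) ≤ α * m := by
    have := Nat.le_ceil ((k:ℝ) / α)
    rw [← hm] at this
    rw [div_le_iff₀ hα0] at this
    linarith [this]
  -- f k ≤ k * c k
  have hfk_le : f k ≤ (k:ℝ) * c k := by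
    rw [hf]
    calc ∑ j ∈ Finset.Icc 1 k, c j ≤ ∑ j ∈ Finset.Icc 1 k, c k := by
          apply Finset.sum_le_sum
          intro j hj
          simp only [Finset.mem_Icc] at hj
          exact hcmono j k hj.1 hj.2 le_rfl
      _ = (k:ℝ) * c k := by
          rw [Finset.sum_const, Nat.card_Icc]
          simp [nsmul_eq_mul]
  have hfstar : 0 < pmin * k - f k := by nlinarith
  -- key: k * f m ≤ m * f k
  have hkey : (k:ℝ) * f m ≤ (m:ℝ) * f k := by
    rcases eq_or_lt_of_le hmk with h | h
    · rw [h]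
    · have hm1k : m + 1 ≤ k := h
      have hcm1 : 1 ≤ m + 1 := by omega
      have hIcc : ∀ i : ℕ, Finset.Icc 1 i = Finset.Ioc 0 i :=
        fun i => (Finset.Icc_add_one_left_eq_Ioc 0 i).symm
      have hsplit : f k = f m + ∑ j ∈ Finset.Ioc m k, c j := by
        rw [hf, hf, hIcc, hIcc, Finset.sum_Ioc_consecutive _ (Nat.zero_le m) hmk]
      have hS1 : f m ≤ (m:ℝ) * c (m+1) := by
        rw [hf]
        calc ∑ j ∈ Finset.Icc 1 m, c j ≤ ∑ j ∈ Finset.Icc 1 m, c (m+1) := by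
              apply Finset.sum_le_sum
              intro j hj
              simp only [Finset.mem_Icc] at hj
              exact hcmono j (m+1) hj.1 (by omega) hm1k
          _ = (m:ℝ) * c (m+1) := by
              rw [Finset.sum_const, Nat.card_Icc]
              simp [nsmul_eq_mul]
      have hS2 : ((k:ℝ) - m) * c (m+1) ≤ ∑ j ∈ Finset.Ioc m k, c j := by
        calc ((k:ℝ) - m) * c (m+1) = ((k - m : ℕ) : ℝ) * c (m+1) := by
              push_cast [Nat.cast_sub hmk]; ring
          _ = ∑ j ∈ Finset.Ioc m k, c (m+1) := by
              rw [Finset.sum_const, Nat.card_Ioc]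
              simp [nsmul_eq_mul]
          _ ≤ ∑ j ∈ Finset.Ioc m k, c j := by
              apply Finset.sum_le_sum
              intro j hj
              simp only [Finset.mem_Ioc] at hj
              exact hcmono (m+1) j hcm1 (by omega) hj.2
      rw [hsplit]
      nlinarith [mul_le_mul_of_nonneg_left hS1 (by linarith : (0:ℝ) ≤ (k:ℝ) - m),
        mul_le_mul_of_nonneg_left hS2 (by linarith : (0:ℝ) ≤ (m:ℝ))]
  have h1 : (1 / α) * (pmin * k - f k) ≤ g m := by
    rw [hg, one_div, inv_mul_le_iff₀ hα0]
    nlinarith [mul_le_mul_of_nonneg_right hkam (le_of_lt hfstar),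
      mul_le_mul_of_nonneg_left hkey (le_of_lt hα0)]
  exact ⟨h1, Nat.sInf_le h1⟩
end
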